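/- (Pointwise torsion identity) For every (0,1)-form u on a Hermitian manifold (M,h), trace(∇̄u^♯ ⊗ ∇ū^♯) = 2|∇̄u|² − |∂̄u − Tu|², where ∇ is the Chern connection, T the torsion, Tu the tensor with components T^{ī}_{j̄k̄} u_{ī}, and u^♯ the (1,0)-vector field dual to u via h. -/

import Mathlib

noncomputable section

/-- Points of ℂⁿ (a holomorphic coordinate chart of the Hermitian manifold). -/
abbrev Cn (n : ℕ) := Fin n → ℂ

/-- Wirtinger derivative `∂/∂z^j`. -/
def wD {n : ℕ} (j : Fin n) (F : Cn n → ℂ) (x : Cn n) : ℂ :=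
  (1 / 2) * (fderiv ℝ F x (Pi.single j 1) - Complex.I * fderiv ℝ F x (Pi.single j Complex.I))

/-- Wirtinger derivative `∂/∂z̄^j`. -/
def wDb {n : ℕ} (j : Fin n) (F : Cn n → ℂ) (x : Cn n) : ℂ :=
  (1 / 2) * (fderiv ℝ F x (Pi.single j 1) + Complex.I * fderiv ℝ F x (Pi.single j Complex.I))

/-- Christoffel symbols `Γ^ℓ_{jk} = h^{m̄ℓ} ∂_j h_{km̄}` of the Chern connection.
Here `h x k m` stands for `h_{k m̄}(x)` and `g x m l` for `h^{m̄ l}(x)`. -/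
def Gam {n : ℕ} (h g : Cn n → Matrix (Fin n) (Fin n) ℂ) (x : Cn n) (l j k : Fin n) : ℂ :=
  ∑ m, g x m l * wD j (fun y => h y k m) x

/-- Chern torsion `T^ℓ_{jk} = Γ^ℓ_{jk} − Γ^ℓ_{kj}`. -/
def Tor {n : ℕ} (h g : Cn n → Matrix (Fin n) (Fin n) ℂ) (x : Cn n) (l j k : Fin n) : ℂ :=
  Gam h g x l j k - Gam h g x l k j

/-- Squared norm (½-convention) of a covariant 2-tensor `A_{j̄k̄}` with respect to `h`:
`|A|² = ½ A_{j̄k̄} \overline{A_{l̄m̄}} h^{j̄l} h^{k̄m}`. -/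
def nsq2 {n : ℕ} (g : Cn n → Matrix (Fin n) (Fin n) ℂ) (x : Cn n)
    (A : Fin n → Fin n → ℂ) : ℂ :=
  (1 / 2) * ∑ j, ∑ k, ∑ l, ∑ m, A j k * star (A l m) * g x j l * g x k m

/-- `(0,1)`-part `∇̄u` of the Chern covariant derivative of a `(0,1)`-form
`u = u_{k̄} dz^{k̄}`: components `∂_{j̄}u_{k̄} − Γ^{ℓ̄}_{j̄k̄} u_{ℓ̄}`. -/
def DbarU {n : ℕ} (h g : Cn n → Matrix (Fin n) (Fin n) ℂ) (u : Cn n → Fin n → ℂ)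
    (x : Cn n) (j k : Fin n) : ℂ :=
  wDb j (fun y => u y k) x - ∑ l, star (Gam h g x l j k) * u x l

/-- Raised form: `u^m = h^{m k̄} u_{k̄}`, the components of `u^♯`. -/
def upU {n : ℕ} (g : Cn n → Matrix (Fin n) (Fin n) ℂ) (u : Cn n → Fin n → ℂ)
    (x : Cn n) (m : Fin n) : ℂ :=
  ∑ k, star (g x m k) * u x k

-- ===================== auxiliary lemmas =====================

section Aux

variable {n : ℕ} {j : Fin n} {x : Cn n}

lemma wD_const (c : ℂ) : wD j (fun _ => c) x = 0 := by
  simp [wD, fderiv_const]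

lemma wDb_const (c : ℂ) : wDb j (fun _ => c) x = 0 := by
  simp [wDb, fderiv_const]

lemma wD_mul {F G : Cn n → ℂ} (hF : DifferentiableAt ℝ F x) (hG : DifferentiableAt ℝ G x) :
    wD j (fun y => F y * G y) x = wD j F x * G x + F x * wD j G x := by
  simp only [wD, fderiv_fun_mul hF hG]
  simp [ContinuousLinearMap.add_apply, ContinuousLinearMap.smul_apply, smul_eq_mul]
  ring

lemma wDb_mul {F G : Cn n → ℂ} (hF : DifferentiableAt ℝ F x) (hG : DifferentiableAt ℝ G x) :
    wDb j (fun y => F y * G y) x = wDb j F x * G x + F x * wDb j G x := by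
  simp only [wDb, fderiv_fun_mul hF hG]
  simp [ContinuousLinearMap.add_apply, ContinuousLinearMap.smul_apply, smul_eq_mul]
  ring

lemma wD_sum {ι : Type*} (s : Finset ι) (F : ι → Cn n → ℂ)
    (hF : ∀ i ∈ s, DifferentiableAt ℝ (F i) x) :
    wD j (fun y => ∑ i ∈ s, F i y) x = ∑ i ∈ s, wD j (F i) x := by
  simp only [wD, fderiv_fun_sum hF, ContinuousLinearMap.sum_apply, mul_sub,
    Finset.mul_sum, Finset.sum_sub_distrib, mul_assoc]

lemma wDb_sum {ι : Type*} (s : Finset ι) (F : ι → Cn n → ℂ)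
    (hF : ∀ i ∈ s, DifferentiableAt ℝ (F i) x) :
    wDb j (fun y => ∑ i ∈ s, F i y) x = ∑ i ∈ s, wDb j (F i) x := by
  simp only [wDb, fderiv_fun_sum hF, ContinuousLinearMap.sum_apply, mul_add,
    Finset.mul_sum, Finset.sum_add_distrib, mul_assoc]

lemma wD_star {F : Cn n → ℂ} :
    wD j (fun y => star (F y)) x = star (wDb j F x) := by
  simp only [wD, wDb]
  rw [fderiv_star]
  simp only [ContinuousLinearMap.coe_comp', Function.comp_apply, ContinuousLinearEquiv.coe_coe,
    show ∀ z : ℂ, (starL' ℝ) z = starRingEnd ℂ z from fun _ => rfl, Complex.star_def,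
    map_mul, map_add, map_sub, map_one, map_div₀, Complex.conj_I, map_ofNat]
  ring

lemma wDb_star {F : Cn n → ℂ} :
    wDb j (fun y => star (F y)) x = star (wD j F x) := by
  simp only [wD, wDb]
  rw [fderiv_star]
  simp only [ContinuousLinearMap.coe_comp', Function.comp_apply, ContinuousLinearEquiv.coe_coe,
    show ∀ z : ℂ, (starL' ℝ) z = starRingEnd ℂ z from fun _ => rfl, Complex.star_def,
    map_mul, map_add, map_sub, map_one, map_div₀, Complex.conj_I, map_ofNat]
  ring

/-- swap the two outer and the two inner indices simultaneously in a quadruple sum -/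
lemma sum4_swap (f : Fin n → Fin n → Fin n → Fin n → ℂ) :
    ∑ a, ∑ b, ∑ c, ∑ d, f a b c d = ∑ a, ∑ b, ∑ c, ∑ d, f b a d c := by
  rw [Finset.sum_comm]
  refine Finset.sum_congr rfl fun a _ => Finset.sum_congr rfl fun b _ => ?_
  rw [Finset.sum_comm]

/-- move the second index of a quadruple sum to the innermost position -/
lemma sum4_rot (f : Fin n → Fin n → Fin n → Fin n → ℂ) :
    ∑ a, ∑ b, ∑ c, ∑ d, f a b c d = ∑ a, ∑ c, ∑ d, ∑ b, f a b c d := by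
  refine Finset.sum_congr rfl fun a _ => ?_
  rw [Finset.sum_comm]
  exact Finset.sum_congr rfl fun c _ => Finset.sum_comm

end Aux


section Main

variable {n : ℕ}

/-- derivative of the inverse metric -/
lemma gderiv (h g : Cn n → Matrix (Fin n) (Fin n) ℂ)
    (hinv : ∀ x, g x * h x = 1) (hinv' : ∀ x, h x * g x = 1)
    (hsm : ∀ j k, ContDiff ℝ (⊤ : ℕ∞) fun y => h y j k)
    (gsm : ∀ j k, ContDiff ℝ (⊤ : ℕ∞) fun y => g y j k)
    (x : Cn n) (j m l : Fin n) :
    wD j (fun y => g y m l) x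
      = -∑ p, ∑ k, g x m p * wD j (fun y => h y p k) x * g x k l := by
  have hd_h : ∀ p k, DifferentiableAt ℝ (fun y => h y p k) x :=
    fun p k => (hsm p k).differentiable (by simp) x
  have hd_g : ∀ p k, DifferentiableAt ℝ (fun y => g y p k) x :=
    fun p k => (gsm p k).differentiable (by simp) x
  have key : ∀ k : Fin n,
      ∑ p, (wD j (fun y => g y m p) x * h x p k + g x m p * wD j (fun y => h y p k) x) = 0 := by
    intro k
    have hconst : (fun y => ∑ p, g y m p * h y p k)
        = fun _ => (1 : Matrix (Fin n) (Fin n) ℂ) m k := by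
      funext y; rw [← Matrix.mul_apply, hinv y]
    have := wD_sum (j := j) (x := x) Finset.univ (fun p => fun y => g y m p * h y p k)
      (fun p _ => ((hd_g m p).mul (hd_h p k)))
    beta_reduce at this
    calc ∑ p, (wD j (fun y => g y m p) x * h x p k + g x m p * wD j (fun y => h y p k) x)
        = ∑ p, wD j (fun y => g y m p * h y p k) x :=
          Finset.sum_congr rfl fun p _ => (wD_mul (hd_g m p) (hd_h p k)).symm
      _ = wD j (fun y => ∑ p, g y m p * h y p k) x := this.symm
      _ = 0 := by rw [hconst, wD_const]
  have hdelta : ∀ p : Fin n, ∑ k, h x p k * g x k l = if p = l then 1 else 0 := by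
    intro p
    rw [← Matrix.mul_apply, hinv' x, Matrix.one_apply]
  have step1 : wD j (fun y => g y m l) x
      = ∑ p, wD j (fun y => g y m p) x * (∑ k, h x p k * g x k l) := by
    simp only [hdelta]
    simp
  have step2 : ∀ p, wD j (fun y => g y m p) x * (∑ k, h x p k * g x k l)
      = ∑ k, wD j (fun y => g y m p) x * h x p k * g x k l := by
    intro p; rw [Finset.mul_sum]; exact Finset.sum_congr rfl fun k _ => by ring
  calc wD j (fun y => g y m l) x
      = ∑ k, ∑ p, wD j (fun y => g y m p) x * h x p k * g x k l := by
        rw [step1]; simp only [step2]; exact Finset.sum_comm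
    _ = ∑ k, ((∑ p, (wD j (fun y => g y m p) x * h x p k
            + g x m p * wD j (fun y => h y p k) x)) * g x k l
          - ∑ p, g x m p * wD j (fun y => h y p k) x * g x k l) := by
        refine Finset.sum_congr rfl fun k _ => ?_
        rw [Finset.sum_mul, ← Finset.sum_sub_distrib]
        exact Finset.sum_congr rfl fun p _ => by ring
    _ = -∑ p, ∑ k, g x m p * wD j (fun y => h y p k) x * g x k l := by
        simp only [key, zero_mul, zero_sub, Finset.sum_neg_distrib]
        exact congrArg Neg.neg Finset.sum_comm



lemma sum4_congr {n : ℕ} (f f' : Fin n → Fin n → Fin n → Fin n → ℂ)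
    (hf : ∀ a b c d, f a b c d = f' a b c d) :
    ∑ a, ∑ b, ∑ c, ∑ d, f a b c d = ∑ a, ∑ b, ∑ c, ∑ d, f' a b c d := by
  simp only [hf]

/-- Hermitian symmetry of the inverse metric. -/
lemma gherm (h g : Cn n → Matrix (Fin n) (Fin n) ℂ)
    (hherm : ∀ x, (h x).IsHermitian) (hinv : ∀ x, g x * h x = 1)
    (x : Cn n) (m k : Fin n) : star (g x m k) = g x k m := by
  have e : (h x)⁻¹ = g x := Matrix.inv_eq_left_inv (hinv x)
  have hg : (g x).IsHermitian := e ▸ (hherm x).inv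
  exact hg.apply k m

/-- `∂̄` of the raised form in terms of the covariant derivative. -/
lemma dbarUp (h g : Cn n → Matrix (Fin n) (Fin n) ℂ) (u : Cn n → Fin n → ℂ)
    (hinv : ∀ x, g x * h x = 1) (hinv' : ∀ x, h x * g x = 1)
    (hsm : ∀ j k, ContDiff ℝ (⊤ : ℕ∞) fun y => h y j k)
    (gsm : ∀ j k, ContDiff ℝ (⊤ : ℕ∞) fun y => g y j k)
    (usm : ∀ k, ContDiff ℝ (⊤ : ℕ∞) fun y => u y k)
    (x : Cn n) (j m : Fin n) :
    wDb j (fun y => upU g u y m) x = ∑ k, star (g x m k) * DbarU h g u x j k := by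
  have hd_g : ∀ p k, DifferentiableAt ℝ (fun y => g y p k) x :=
    fun p k => (gsm p k).differentiable (by simp) x
  have hd_u : ∀ k, DifferentiableAt ℝ (fun y => u y k) x :=
    fun k => (usm k).differentiable (by simp) x
  have hd_sg : ∀ p q, DifferentiableAt ℝ (fun y => star (g y p q)) x :=
    fun p q => (hd_g p q).star
  have e1 : wDb j (fun y => upU g u y m) x
      = ∑ k, (star (wD j (fun y => g y m k) x) * u x k
          + star (g x m k) * wDb j (fun y => u y k) x) := by
    have hs := wDb_sum (j := j) (x := x) Finset.univ (fun k => fun y => star (g y m k) * u y k)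
      (fun k _ => (hd_sg m k).mul (hd_u k))
    beta_reduce at hs
    calc wDb j (fun y => upU g u y m) x
        = wDb j (fun y => ∑ k, star (g y m k) * u y k) x := rfl
      _ = ∑ k, wDb j (fun y => star (g y m k) * u y k) x := hs
      _ = _ := Finset.sum_congr rfl fun k _ => by
            rw [wDb_mul (hd_sg m k) (hd_u k), wDb_star]
  have main : ∑ k, star (wD j (fun y => g y m k) x) * u x k
      = -∑ k, star (g x m k) * (∑ l, star (Gam h g x l j k) * u x l) := by
    calc ∑ k, star (wD j (fun y => g y m k) x) * u x k
        = ∑ k, ∑ p, ∑ q,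
            -(star (g x m p) * star (wD j (fun y => h y p q) x) * star (g x q k) * u x k) := by
          refine Finset.sum_congr rfl fun k _ => ?_
          rw [gderiv h g hinv hinv' hsm gsm x j m k, star_neg, star_sum, neg_mul,
            Finset.sum_mul, ← Finset.sum_neg_distrib]
          refine Finset.sum_congr rfl fun p _ => ?_
          rw [star_sum, Finset.sum_mul, ← Finset.sum_neg_distrib]
          refine Finset.sum_congr rfl fun q _ => ?_
          simp only [star_mul']
          try ring
      _ = ∑ k, ∑ p, ∑ q,
            -(star (g x m k) * star (wD j (fun y => h y k q) x) * star (g x q p) * u x p) := by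
          rw [Finset.sum_comm]
      _ = -∑ k, star (g x m k) * (∑ l, star (Gam h g x l j k) * u x l) := by
          rw [← Finset.sum_neg_distrib]
          refine Finset.sum_congr rfl fun k _ => ?_
          rw [Finset.mul_sum, ← Finset.sum_neg_distrib]
          refine Finset.sum_congr rfl fun l _ => ?_
          simp only [Gam, star_sum, star_mul', Finset.sum_mul, Finset.mul_sum,
            ← Finset.sum_neg_distrib]
          refine Finset.sum_congr rfl fun p _ => ?_
          ring
  rw [e1, Finset.sum_add_distrib, main]
  simp only [DbarU, mul_sub, Finset.sum_sub_distrib]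
  ring

/-- `∂` of the conjugate of the raised form. -/
lemma dUpStar (h g : Cn n → Matrix (Fin n) (Fin n) ℂ) (u : Cn n → Fin n → ℂ)
    (hinv : ∀ x, g x * h x = 1) (hinv' : ∀ x, h x * g x = 1)
    (hsm : ∀ j k, ContDiff ℝ (⊤ : ℕ∞) fun y => h y j k)
    (gsm : ∀ j k, ContDiff ℝ (⊤ : ℕ∞) fun y => g y j k)
    (usm : ∀ k, ContDiff ℝ (⊤ : ℕ∞) fun y => u y k)
    (x : Cn n) (j m : Fin n) :
    wD m (fun y => star (upU g u y j)) x = ∑ l, g x j l * star (DbarU h g u x m l) := by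
  rw [wD_star, dbarUp h g u hinv hinv' hsm gsm usm x m j, star_sum]
  refine Finset.sum_congr rfl fun l _ => ?_
  rw [star_mul', star_star]

/-- third-order expression rewritten via the covariant derivative. -/
lemma Bdiff (h g : Cn n → Matrix (Fin n) (Fin n) ℂ) (u : Cn n → Fin n → ℂ)
    (x : Cn n) (j k : Fin n) :
    (wDb j (fun y => u y k) x - wDb k (fun y => u y j) x)
        - ∑ i, star (Tor h g x i j k) * u x i
      = DbarU h g u x j k - DbarU h g u x k j := by
  simp only [DbarU, Tor, star_sub, sub_mul, Finset.sum_sub_distrib]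
  ring

/-- the purely algebraic part of the torsion identity. -/
lemma alg (N G : Fin n → Fin n → ℂ) :
    ∑ j, ∑ m, ∑ k, ∑ l, (G k m * N j k) * (G j l * star (N m l))
      = 2 * ((1/2) * ∑ j, ∑ k, ∑ l, ∑ m, N j k * star (N l m) * G j l * G k m)
        - (1/2) * ∑ j, ∑ k, ∑ l, ∑ m,
            (N j k - N k j) * star (N l m - N m l) * G j l * G k m := by
  have e0 : (∑ j, ∑ k, ∑ l, ∑ m,
        (N j k - N k j) * star (N l m - N m l) * G j l * G k m)
      = ((∑ j, ∑ k, ∑ l, ∑ m, N j k * star (N l m) * G j l * G k m)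
          - ∑ j, ∑ k, ∑ l, ∑ m, N k j * star (N l m) * G j l * G k m)
        - ((∑ j, ∑ k, ∑ l, ∑ m, N j k * star (N m l) * G j l * G k m)
          - ∑ j, ∑ k, ∑ l, ∑ m, N k j * star (N m l) * G j l * G k m) := by
    simp only [star_sub, sub_mul, mul_sub, Finset.sum_sub_distrib]
  have e1 : (∑ j, ∑ k, ∑ l, ∑ m, N k j * star (N m l) * G j l * G k m)
      = ∑ j, ∑ k, ∑ l, ∑ m, N j k * star (N l m) * G j l * G k m := by
    rw [sum4_swap]
    exact sum4_congr _ _ fun a b c d => by ring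
  have e2 : (∑ j, ∑ k, ∑ l, ∑ m, N k j * star (N l m) * G j l * G k m)
      = ∑ j, ∑ k, ∑ l, ∑ m, N j k * star (N m l) * G j l * G k m := by
    rw [sum4_swap]
    exact sum4_congr _ _ fun a b c d => by ring
  have e3 : (∑ j, ∑ m, ∑ k, ∑ l, (G k m * N j k) * (G j l * star (N m l)))
      = ∑ j, ∑ k, ∑ l, ∑ m, N j k * star (N m l) * G j l * G k m := by
    rw [sum4_rot]
    exact sum4_congr _ _ fun a b c d => by ring
  rw [e0, e1, e2, e3]
  ring


/-- pointwise torsion identity, Lemma `lem:torsion`: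
`trace(∇̄u^♯ ⊗ ∇ū^♯) = 2|∇̄u|² − |∂̄u − Tu|²`, where the trace is
`∂_{j̄}u^m · ∂_m u^{j̄}`. -/
theorem trace_eq_two_nablaSq_sub_dbar_minus_torsionSq {n : ℕ}
    (h g : Cn n → Matrix (Fin n) (Fin n) ℂ)
    (u : Cn n → Fin n → ℂ)
    (hherm : ∀ x, (h x).IsHermitian)
    (hinv : ∀ x, g x * h x = 1) (hinv' : ∀ x, h x * g x = 1)
    (hsm : ∀ j k, ContDiff ℝ (⊤ : ℕ∞) fun y => h y j k)
    (gsm : ∀ j k, ContDiff ℝ (⊤ : ℕ∞) fun y => g y j k)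
    (usm : ∀ k, ContDiff ℝ (⊤ : ℕ∞) fun y => u y k)
    (x : Cn n) :
    (∑ j, ∑ m, wDb j (fun y => upU g u y m) x * wD m (fun y => star (upU g u y j)) x)
      = 2 * nsq2 g x (DbarU h g u x)
        - nsq2 g x (fun j k =>
            (wDb j (fun y => u y k) x - wDb k (fun y => u y j) x)
              - ∑ i, star (Tor h g x i j k) * u x i) := by
  have hL : ∀ j m : Fin n, wDb j (fun y => upU g u y m) x
      = ∑ k, g x k m * DbarU h g u x j k := by
    intro j m
    rw [dbarUp h g u hinv hinv' hsm gsm usm x j m]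
    exact Finset.sum_congr rfl fun k _ => by rw [gherm h g hherm hinv x m k]
  calc (∑ j, ∑ m, wDb j (fun y => upU g u y m) x * wD m (fun y => star (upU g u y j)) x)
      = ∑ j, ∑ m, ∑ k, ∑ l,
          (g x k m * DbarU h g u x j k) * (g x j l * star (DbarU h g u x m l)) := by
        refine Finset.sum_congr rfl fun j _ => Finset.sum_congr rfl fun m _ => ?_
        rw [hL j m, dUpStar h g u hinv hinv' hsm gsm usm x j m, Finset.sum_mul_sum]
    _ = _ := by
        simp only [nsq2, Bdiff h g u x]
        exact alg (DbarU h g u x) (fun a b => g x a b)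



end Main
end
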